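/- arXiv:1302.5120 — 4 statements merged into one kernel-verified Lean document; each statement's English description precedes it below -/
import Mathlib

section
/- Let n and r be positive natural numbers and let x and y be two distinct nonzero vectors in 𝔽₂ⁿ. If H is a matrix chosen uniformly at random from all r × n matrices over 𝔽₂, then the probability that both H·x = 0 and H·y = 0 is exactly 2^(−2r). In particular, the events {x ∈ ker H} and {y ∈ ker H} are pairwise independent. -/
/-!
Over a field `K`, the map `H ↦ (H x, H y)` is `K`-linear and, when `x` and `y` are linearly
independent, surjective: the matrix with rows `x, y` has full rank, so a row `w` with prescribed
values of `w ⬝ᵥ x` and `w ⬝ᵥ y` exists, and the rows of `H` can be chosen independently. Hence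
its kernel `{H | H x = H y = 0}` has index `|K|^(2r)` among the `r × n` matrices, and likewise
`{H | H x = 0}` has index `|K|^r`. Over `𝔽₂` two distinct
nonzero vectors are linearly independent, which gives `2^(-2r) = 2^(-r) · 2^(-r)`.
-/

open Matrix Finset Function

theorem AddMonoidHom.card_ker_mul_card_of_surjective {G H : Type*} [AddGroup G] [AddGroup H]
    (f : G →+ H) (hf : Surjective f) : Nat.card f.ker * Nat.card H = Nat.card G := by
  rw [← f.ker.card_mul_index, AddSubgroup.index_ker f, f.range_eq_top.mpr hf, AddSubgroup.card_top]

variable {K : Type*} [Field K] {m n ι : Type*} [Fintype n] [Fintype ι]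

theorem Matrix.mulVec_surjective_of_linearIndependent_row {V : Matrix ι n K}
    (hV : LinearIndependent K V.row) : Surjective V.mulVecLin := by
  rw [← LinearMap.range_eq_top]
  apply Submodule.eq_top_of_finrank_eq
  rw [Module.finrank_fintype_fun_eq_card, ← hV.rank_matrix]
  rfl

variable (m) in
def Matrix.mulVecFamily (v : ι → n → K) : Matrix m n K →ₗ[K] ι → m → K where
  toFun H i := H *ᵥ v i
  map_add' A B := funext fun i => add_mulVec A B (v i)
  map_smul' c A := funext fun i => smul_mulVec c A (v i)

theorem Matrix.mulVecFamily_surjective {v : ι → n → K} (hv : LinearIndependent K v) :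
    Surjective (mulVecFamily m v) := by
  intro T
  have hrow := mulVec_surjective_of_linearIndependent_row (V := of v) hv
  choose w hw using fun k : m => hrow fun i => T i k
  refine ⟨of w, funext fun i => funext fun k => ?_⟩
  change (of w *ᵥ v i) k = T i k
  exact (dotProduct_comm _ _).trans (congrFun (hw k) i)

variable [Fintype m] [DecidableEq m] [DecidableEq n] [Fintype K] [DecidableEq K]

theorem Matrix.card_filter_forall_mulVec_eq_zero_mul {v : ι → n → K}
    (hv : LinearIndependent K v) :
    #{H : Matrix m n K | ∀ i, H *ᵥ v i = 0} * Fintype.card K ^ (Fintype.card ι * Fintype.card m)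
      = Fintype.card (Matrix m n K) := by
  have hker := (mulVecFamily m v).toAddMonoidHom.card_ker_mul_card_of_surjective
    (mulVecFamily_surjective hv)
  have hcard : Nat.card (ι → m → K) = Fintype.card K ^ (Fintype.card ι * Fintype.card m) := by
    rw [Nat.card_fun, Nat.card_fun, ← pow_mul, mul_comm]
    simp only [Nat.card_eq_fintype_card]
  rw [hcard, Nat.card_eq_fintype_card (α := Matrix m n K)] at hker
  rw [← hker, ← Fintype.card_subtype, ← Nat.card_eq_fintype_card]
  congr 1
  refine Nat.card_congr (Equiv.subtypeEquivRight fun H => ?_)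
  exact funext_iff.symm

theorem Matrix.card_filter_forall_mulVec_eq_zero_div_card {v : ι → n → K}
    (hv : LinearIndependent K v) :
    (#{H : Matrix m n K | ∀ i, H *ᵥ v i = 0} : ℝ) / Fintype.card (Matrix m n K)
      = ((Fintype.card K : ℝ) ^ (Fintype.card ι * Fintype.card m))⁻¹ := by
  rw [div_eq_iff (Nat.cast_ne_zero.mpr Fintype.card_ne_zero),
    ← card_filter_forall_mulVec_eq_zero_mul hv]
  push_cast
  field_simp

theorem ZMod.linearIndependent_pair_two {V : Type*} [AddCommGroup V] [Module (ZMod 2) V]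
    {x y : V} (hx : x ≠ 0) (hy : y ≠ 0) (hxy : x ≠ y) : LinearIndependent (ZMod 2) ![x, y] := by
  rw [LinearIndependent.pair_iff' hx]
  intro a
  obtain rfl | rfl : a = 0 ∨ a = 1 := by decide +revert
  · simpa using hy.symm
  · simpa using hxy

theorem prob_pair_nonzero_in_random_code_general (n r : ℕ)
    (x y : Fin n → ZMod 2) (hx : x ≠ 0) (hy : y ≠ 0) (hxy : x ≠ y) :
    ((Finset.univ.filter
        (fun H : Matrix (Fin r) (Fin n) (ZMod 2) =>
          H.mulVec x = 0 ∧ H.mulVec y = 0)).card : ℝ) /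
        (Fintype.card (Matrix (Fin r) (Fin n) (ZMod 2)) : ℝ)
      = (2 : ℝ) ^ (-(2 * r : ℤ)) ∧
    ((Finset.univ.filter
        (fun H : Matrix (Fin r) (Fin n) (ZMod 2) =>
          H.mulVec x = 0 ∧ H.mulVec y = 0)).card : ℝ) /
        (Fintype.card (Matrix (Fin r) (Fin n) (ZMod 2)) : ℝ)
      = (((Finset.univ.filter
            (fun H : Matrix (Fin r) (Fin n) (ZMod 2) => H.mulVec x = 0)).card : ℝ) /
          (Fintype.card (Matrix (Fin r) (Fin n) (ZMod 2)) : ℝ)) *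
        (((Finset.univ.filter
            (fun H : Matrix (Fin r) (Fin n) (ZMod 2) => H.mulVec y = 0)).card : ℝ) /
          (Fintype.card (Matrix (Fin r) (Fin n) (ZMod 2)) : ℝ)) := by
  have prob_pair := card_filter_forall_mulVec_eq_zero_div_card (m := Fin r)
    (ZMod.linearIndependent_pair_two hx hy hxy)
  have prob_x := card_filter_forall_mulVec_eq_zero_div_card (m := Fin r)
    (linearIndependent_unique_iff.mpr hx : LinearIndependent (ZMod 2) ![x])
  have prob_y := card_filter_forall_mulVec_eq_zero_div_card (m := Fin r)
    (linearIndependent_unique_iff.mpr hy : LinearIndependent (ZMod 2) ![y])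
  simp only [Fin.forall_fin_two, Fin.forall_fin_one, cons_val_zero, cons_val_one]
    at prob_pair prob_x prob_y
  rw [prob_pair, prob_x, prob_y]
  norm_num
  exact ⟨by norm_cast, by ring⟩

/-- For two distinct fixed nonzero vectors `x, y ∈ 𝔽₂ⁿ` and a uniformly
random `r × n` matrix `H` over `𝔽₂`, the probability that both `H·x = 0` and `H·y = 0`
is exactly `2^(-2r)`; in particular the two events are (pairwise) independent. -/
theorem prob_pair_nonzero_in_random_code (n r : ℕ) (hn : 0 < n) (hr : 0 < r)
    (x y : Fin n → ZMod 2) (hx : x ≠ 0) (hy : y ≠ 0) (hxy : x ≠ y) :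
    ((Finset.univ.filter
        (fun H : Matrix (Fin r) (Fin n) (ZMod 2) =>
          H.mulVec x = 0 ∧ H.mulVec y = 0)).card : ℝ) /
        (Fintype.card (Matrix (Fin r) (Fin n) (ZMod 2)) : ℝ)
      = (2 : ℝ) ^ (-(2 * r : ℤ)) ∧
    ((Finset.univ.filter
        (fun H : Matrix (Fin r) (Fin n) (ZMod 2) =>
          H.mulVec x = 0 ∧ H.mulVec y = 0)).card : ℝ) /
        (Fintype.card (Matrix (Fin r) (Fin n) (ZMod 2)) : ℝ)
      = (((Finset.univ.filter
            (fun H : Matrix (Fin r) (Fin n) (ZMod 2) => H.mulVec x = 0)).card : ℝ) /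
          (Fintype.card (Matrix (Fin r) (Fin n) (ZMod 2)) : ℝ)) *
        (((Finset.univ.filter
            (fun H : Matrix (Fin r) (Fin n) (ZMod 2) => H.mulVec y = 0)).card : ℝ) /
          (Fintype.card (Matrix (Fin r) (Fin n) (ZMod 2)) : ℝ)) :=
  prob_pair_nonzero_in_random_code_general n r x y hx hy hxy
end

section
/- Let n and r be positive natural numbers and let X be a finite set of nonzero vectors in 𝔽₂ⁿ. If H is a matrix chosen uniformly at random from all r × n matrices over 𝔽₂ and N := |{x ∈ X : H·x = 0}|, then the variance of N is at most its expectation: Var(N) ≤ E(N). (The covariance terms vanish because, for distinct nonzero x, y ∈ 𝔽₂ⁿ, the events {H·x = 0} and {H·y = 0} are independent.) -/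
/-!
Write `N` as the sum over `v ∈ X` of the indicators of `H *ᵥ v = 0`. Distinct nonzero vectors of
`𝔽₂ⁿ` are linearly independent, so `H ↦ (H *ᵥ v, H *ᵥ w)` is a surjective additive map onto
`𝔽₂ʳ × 𝔽₂ʳ`; its fibres all have the same size, so the events `H *ᵥ v = 0` and `H *ᵥ w = 0` are
independent. The indicators are therefore pairwise uncorrelated, and `Var N` is the sum of their
variances `p - p² ≤ p`, which add up to `E N`.
-/

open Finset Function
open scoped BigOperators Matrix

section UniformVariance

variable {Ω ι : Type*} [Fintype Ω]

noncomputable def uniformVariance (f : Ω → ℝ) : ℝ :=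
  𝔼 ω, (f ω - 𝔼 ω', f ω') ^ 2

lemma uniformVariance_eq_expect_sq_sub_sq_expect (f : Ω → ℝ) :
    uniformVariance f = 𝔼 ω, f ω ^ 2 - (𝔼 ω, f ω) ^ 2 := by
  cases isEmpty_or_nonempty Ω
  · simp [uniformVariance]
  · have expand (ω : Ω) : (f ω - 𝔼 ω', f ω') ^ 2
        = f ω ^ 2 - 2 * (𝔼 ω', f ω') * f ω + (𝔼 ω', f ω') ^ 2 := by ring
    simp only [uniformVariance, expand, expect_add_distrib, expect_sub_distrib,
      ← mul_expect, Fintype.expect_const]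
    ring

lemma uniformVariance_sum_of_pairwise_uncorrelated (X : Finset ι) (f : ι → Ω → ℝ)
    (huncorr : (X : Set ι).Pairwise fun x y =>
      𝔼 ω, f x ω * f y ω = (𝔼 ω, f x ω) * 𝔼 ω, f y ω) :
    uniformVariance (fun ω => ∑ x ∈ X, f x ω) = ∑ x ∈ X, uniformVariance (f x) := by
  have hcov (x : ι) (hx : x ∈ X) :
      ∑ y ∈ X, (𝔼 ω, f x ω * f y ω - (𝔼 ω, f x ω) * 𝔼 ω, f y ω) = uniformVariance (f x) := by
    rw [sum_eq_single_of_mem x hx fun y hy hyx => sub_eq_zero.mpr (huncorr hx hy hyx.symm),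
      uniformVariance_eq_expect_sq_sub_sq_expect]
    simp only [sq]
  rw [uniformVariance_eq_expect_sq_sub_sq_expect, ← sum_congr rfl hcov]
  simp only [sq, sum_mul_sum, expect_sum_comm, sum_sub_distrib]

lemma uniformVariance_le_expect_of_idempotent (f : Ω → ℝ) (hf : ∀ ω, f ω ^ 2 = f ω) :
    uniformVariance f ≤ 𝔼 ω, f ω := by
  rw [uniformVariance_eq_expect_sq_sub_sq_expect]
  simp only [hf]
  linarith [sq_nonneg (𝔼 ω, f ω)]

end UniformVariance

lemma AddMonoidHom.expect_ite_eq_zero_of_surjective {A B : Type*} [AddGroup A] [Fintype A]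
    [AddGroup B] [DecidableEq B] (f : A →+ B) (hf : Surjective f) :
    𝔼 a, (if f a = 0 then (1 : ℝ) else 0) = (Nat.card B : ℝ)⁻¹ := by
  have hcard : Nat.card f.ker * Nat.card B = Nat.card A := by
    rw [← f.ker.card_mul_index, AddSubgroup.index_ker, AddMonoidHom.range_eq_top.mpr hf,
      AddSubgroup.card_top]
  have hker : Nat.card f.ker = #{a | f a = 0} := by
    rw [Nat.card_eq_fintype_card, Fintype.card_subtype]
    simp only [AddMonoidHom.mem_ker]
  have hker_ne_zero : (Nat.card f.ker : ℝ) ≠ 0 := by exact_mod_cast Nat.card_pos.ne'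
  rw [Fintype.expect_eq_sum_div_card, sum_boole, ← Nat.card_eq_fintype_card, ← hcard, ← hker]
  push_cast
  field_simp

lemma Matrix.exists_mulVec_eq_of_linearIndependent {K m n ι : Type*} [Field K] [Fintype n]
    [DecidableEq n] {v : ι → n → K} (hv : LinearIndependent K v) (a : ι → m → K) :
    ∃ H : Matrix m n K, ∀ i, H *ᵥ v i = a i := by
  obtain ⟨g, hg⟩ := LinearMap.exists_extend ((Module.Basis.span hv).constr K a)
  refine ⟨LinearMap.toMatrix' g, fun i => ?_⟩
  rw [LinearMap.toMatrix'_mulVec, ← Module.Basis.coe_span_apply hv i, ← Submodule.subtype_apply,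
    ← LinearMap.comp_apply, hg, Module.Basis.constr_basis]

lemma ZMod.linearIndependent_pair {V : Type*} [AddCommGroup V] [Module (ZMod 2) V] {v w : V}
    (hv : v ≠ 0) (hw : w ≠ 0) (hvw : v ≠ w) : LinearIndependent (ZMod 2) ![v, w] := by
  rw [LinearIndependent.pair_iff' hv]
  intro a
  obtain rfl | rfl : a = 0 ∨ a = 1 := by revert a; decide
  · simpa using hw.symm
  · simpa using hvw

lemma Matrix.expect_ite_mulVec_eq_zero_mul_ite_mulVec_eq_zero {K m n : Type*} [Field K] [Fintype K]
    [DecidableEq K] [Fintype m] [DecidableEq m] [Fintype n] [DecidableEq n] {v w : n → K}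
    (hvw : LinearIndependent K ![v, w]) :
    𝔼 H : Matrix m n K, (if H *ᵥ v = 0 then (1 : ℝ) else 0) * (if H *ᵥ w = 0 then 1 else 0) =
      (𝔼 H : Matrix m n K, if H *ᵥ v = 0 then (1 : ℝ) else 0) *
        𝔼 H : Matrix m n K, if H *ᵥ w = 0 then (1 : ℝ) else 0 := by
  set Φ := (mulVec.addMonoidHomLeft (m := m) v).prod (mulVec.addMonoidHomLeft w)
  have hΦ : Surjective Φ := by
    rintro ⟨a, b⟩
    obtain ⟨H, hH⟩ := exists_mulVec_eq_of_linearIndependent hvw ![a, b]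
    exact ⟨H, Prod.ext (hH 0) (hH 1)⟩
  have hv : 𝔼 H : Matrix m n K, (if H *ᵥ v = 0 then (1 : ℝ) else 0) = (Nat.card (m → K) : ℝ)⁻¹ :=
    (mulVec.addMonoidHomLeft v).expect_ite_eq_zero_of_surjective (Prod.fst_surjective.comp hΦ)
  have hw : 𝔼 H : Matrix m n K, (if H *ᵥ w = 0 then (1 : ℝ) else 0) = (Nat.card (m → K) : ℝ)⁻¹ :=
    (mulVec.addMonoidHomLeft w).expect_ite_eq_zero_of_surjective (Prod.snd_surjective.comp hΦ)
  have hboth : 𝔼 H : Matrix m n K, (if H *ᵥ v = 0 ∧ H *ᵥ w = 0 then (1 : ℝ) else 0) =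
      (Nat.card ((m → K) × (m → K)) : ℝ)⁻¹ := by
    rw [← Φ.expect_ite_eq_zero_of_surjective hΦ]
    simp only [Φ, AddMonoidHom.prod_apply, Prod.mk_eq_zero]
    rfl
  simp only [ite_zero_mul_ite_zero, mul_one]
  rw [hv, hw, hboth, Nat.card_prod, Nat.cast_mul, mul_inv]

theorem variance_le_expectation_random_code_general (n r : ℕ)
    (X : Finset (Fin n → ZMod 2)) (hX : ∀ v ∈ X, v ≠ 0)
    (N : Matrix (Fin r) (Fin n) (ZMod 2) → ℝ)
    (hN : ∀ H, N H = ((X.filter (fun v => H.mulVec v = 0)).card : ℝ))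
    (E V : ℝ)
    (hE : E = (∑ H : Matrix (Fin r) (Fin n) (ZMod 2), N H) /
      (Fintype.card (Matrix (Fin r) (Fin n) (ZMod 2)) : ℝ))
    (hV : V = (∑ H : Matrix (Fin r) (Fin n) (ZMod 2), (N H - E) ^ 2) /
      (Fintype.card (Matrix (Fin r) (Fin n) (ZMod 2)) : ℝ)) :
    V ≤ E := by
  set kernelIndicator := fun (v : Fin n → ZMod 2) (H : Matrix (Fin r) (Fin n) (ZMod 2)) =>
    if H *ᵥ v = 0 then (1 : ℝ) else 0
  have hN_sum : N = fun H => ∑ v ∈ X, kernelIndicator v H :=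
    funext fun H => by rw [hN, natCast_card_filter]
  have hE_expect : E = 𝔼 H, N H := by rw [hE, Fintype.expect_eq_sum_div_card]
  have hV_var : V = uniformVariance N := by
    rw [hV, uniformVariance, ← hE_expect, Fintype.expect_eq_sum_div_card]
  have huncorr : (X : Set (Fin n → ZMod 2)).Pairwise fun v w =>
      𝔼 H, kernelIndicator v H * kernelIndicator w H =
        (𝔼 H, kernelIndicator v H) * 𝔼 H, kernelIndicator w H := fun v hv w hw hvw =>
    Matrix.expect_ite_mulVec_eq_zero_mul_ite_mulVec_eq_zero
      (ZMod.linearIndependent_pair (hX v hv) (hX w hw) hvw)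
  calc V = ∑ v ∈ X, uniformVariance (kernelIndicator v) := by
        rw [hV_var, hN_sum, uniformVariance_sum_of_pairwise_uncorrelated X _ huncorr]
    _ ≤ ∑ v ∈ X, 𝔼 H, kernelIndicator v H := sum_le_sum fun v _ =>
        uniformVariance_le_expect_of_idempotent _ fun H => by simp [kernelIndicator]
    _ = E := by rw [hE_expect, hN_sum, expect_sum_comm]

/-- Let `N(H)` count the elements of a finite set `X` of nonzero vectors of
`𝔽₂ⁿ` lying in `ker H`, for `H` a uniformly random `r × n` matrix over `𝔽₂`. Then the
variance of `N` is at most its expectation: `Var(N) ≤ E(N)`. -/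
theorem variance_le_expectation_random_code (n r : ℕ) (hn : 0 < n) (hr : 0 < r)
    (X : Finset (Fin n → ZMod 2)) (hX : ∀ v ∈ X, v ≠ 0)
    (N : Matrix (Fin r) (Fin n) (ZMod 2) → ℝ)
    (hN : ∀ H, N H = ((X.filter (fun v => H.mulVec v = 0)).card : ℝ))
    (E V : ℝ)
    (hE : E = (∑ H : Matrix (Fin r) (Fin n) (ZMod 2), N H) /
      (Fintype.card (Matrix (Fin r) (Fin n) (ZMod 2)) : ℝ))
    (hV : V = (∑ H : Matrix (Fin r) (Fin n) (ZMod 2), (N H - E) ^ 2) /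
      (Fintype.card (Matrix (Fin r) (Fin n) (ZMod 2)) : ℝ)) :
    V ≤ E :=
  variance_le_expectation_random_code_general n r X hX N hN E V hE hV
end

section
/- Let n and r be positive natural numbers and let X be a finite set of nonzero vectors in 𝔽₂ⁿ with |X| = m, and set x := m · 2^(−r). If H is a matrix chosen uniformly at random from all r × n matrices over 𝔽₂, then the probability that X meets the random code ker H satisfies P(X ∩ ker H ≠ ∅) ≥ x·(1 − x/2). -/
/-!
A fixed nonzero `v` lies in `ker H` for a `2⁻ʳ` fraction of all `H`, and two distinct nonzero
vectors, being linearly independent over `𝔽₂`, lie there simultaneously for a `4⁻ʳ` fraction: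
for independent `v₁, …, vₖ` the linear map `H ↦ (H vⱼ)ⱼ` is onto, so all its fibres have the same
size. The degree-two Bonferroni inequality `P(⋃ Aᵥ) ≥ ∑ P(Aᵥ) - ∑_{v<w} P(Aᵥ ∩ A_w)` then gives
`P ≥ m 2⁻ʳ - m² 4⁻ʳ / 2 = x (1 - x / 2)`.
-/

open Finset Matrix

namespace Finset

theorem two_mul_card_le_card_offDiag_add_two {α : Type*} [DecidableEq α] {t : Finset α}
    (ht : t.Nonempty) : 2 * #t ≤ #t.offDiag + 2 := by
  obtain ⟨k, hk⟩ : ∃ k, #t = k + 1 := Nat.exists_eq_add_one.2 ht.card_pos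
  rw [offDiag_card, ← Nat.mul_sub_one, hk, Nat.add_sub_cancel]
  nlinarith [Nat.le_mul_self k]

variable {α β : Type*} [DecidableEq α]

/-- A point lying in `k ≥ 1` of the sets contributes `2k` on the left and `2 + k(k-1)` on the
right. -/
theorem two_mul_sum_card_filter_le (X : Finset α) (s : Finset β)
    (p : α → β → Prop) [∀ a b, Decidable (p a b)] :
    2 * ∑ a ∈ X, #{b ∈ s | p a b}
      ≤ 2 * #{b ∈ s | ∃ a ∈ X, p a b} + ∑ q ∈ X.offDiag, #{b ∈ s | p q.1 b ∧ p q.2 b} := by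
  have hsingle : ∑ a ∈ X, #{b ∈ s | p a b} = ∑ b ∈ s, #{a ∈ X | p a b} :=
    sum_card_bipartiteAbove_eq_sum_card_bipartiteBelow p
  have hpair : ∑ q ∈ X.offDiag, #{b ∈ s | p q.1 b ∧ p q.2 b}
      = ∑ b ∈ s, #{a ∈ X | p a b}.offDiag := by
    refine (sum_card_bipartiteAbove_eq_sum_card_bipartiteBelow
      (fun (q : α × α) b => p q.1 b ∧ p q.2 b)).trans (sum_congr rfl fun b _ => congrArg card ?_)
    ext q
    simp only [mem_bipartiteBelow, mem_offDiag, mem_filter]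
    tauto
  rw [hsingle, hpair, card_filter, mul_sum, mul_sum, ← sum_add_distrib]
  refine sum_le_sum fun b _ => ?_
  split_ifs with h
  · have := two_mul_card_le_card_offDiag_add_two (filter_nonempty_iff.2 h)
    omega
  · rw [← filter_nonempty_iff, not_nonempty_iff_eq_empty] at h
    simp [h]

theorem mul_one_sub_mul_card_le_card_filter_exists [Fintype β] (X : Finset α)
    (p : α → β → Prop) [∀ a b, Decidable (p a b)] (ρ : ℝ)
    (hsingle : ∀ a ∈ X, (#{b | p a b} : ℝ) = ρ * Fintype.card β)
    (hpair : ∀ q ∈ X.offDiag, (#{b | p q.1 b ∧ p q.2 b} : ℝ) ≤ ρ ^ 2 * Fintype.card β) :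
    #X * ρ * (1 - #X * ρ / 2) * Fintype.card β ≤ #{b | ∃ a ∈ X, p a b} := by
  have hbonf : 2 * ∑ a ∈ X, (#{b | p a b} : ℝ)
      ≤ 2 * #{b | ∃ a ∈ X, p a b} + ∑ q ∈ X.offDiag, (#{b | p q.1 b ∧ p q.2 b} : ℝ) := by
    exact_mod_cast two_mul_sum_card_filter_le X univ p
  have hS₁ : ∑ a ∈ X, (#{b | p a b} : ℝ) = #X * (ρ * Fintype.card β) := by
    rw [sum_congr rfl hsingle, sum_const, nsmul_eq_mul]
  have hS₂ : ∑ q ∈ X.offDiag, (#{b | p q.1 b ∧ p q.2 b} : ℝ)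
      ≤ #X * #X * (ρ ^ 2 * Fintype.card β) :=
    calc _ ≤ #X.offDiag * (ρ ^ 2 * Fintype.card β) := by
          simpa using sum_le_card_nsmul _ _ _ hpair
      _ ≤ #X * #X * (ρ ^ 2 * Fintype.card β) := by
          gcongr
          exact_mod_cast (offDiag_card X).trans_le (Nat.sub_le _ _)
  linarith

end Finset

theorem LinearMap.card_ker_mul_card_of_surjective {R M N : Type*} [Ring R] [AddCommGroup M]
    [Module R M] [AddCommGroup N] [Module R N] (f : M →ₗ[R] N) (hf : Function.Surjective f) :
    Nat.card (LinearMap.ker f) * Nat.card N = Nat.card M := by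
  rw [Submodule.card_eq_card_quotient_mul_card (LinearMap.ker f),
    Nat.card_congr (f.quotKerEquivOfSurjective hf).toEquiv]

theorem ZMod.linearIndependent_pair_of_ne {M : Type*} [AddCommGroup M] [Module (ZMod 2) M]
    {v w : M} (hv : v ≠ 0) (hw : w ≠ 0) (hvw : v ≠ w) : LinearIndependent (ZMod 2) ![v, w] := by
  rw [LinearIndependent.pair_iff' hv]
  intro a
  obtain rfl | rfl : a = 0 ∨ a = 1 := by revert a; decide
  exacts [by simpa using hw.symm, by simpa using hvw]

namespace Matrix

variable {K m n ι : Type*} [Field K] [Fintype n]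

def mulVecFamily_s4 (v : ι → n → K) : Matrix m n K →ₗ[K] ι → m → K where
  toFun H j := H *ᵥ v j
  map_add' _ _ := by ext; simp [add_mulVec]
  map_smul' _ _ := by ext; simp [smul_mulVec]

theorem mulVecFamily_surjective_s4 [Fintype ι] {v : ι → n → K} (hv : LinearIndependent K v) :
    Function.Surjective (mulVecFamily_s4 (m := m) v) := by
  classical
  -- A left inverse `g` of `c ↦ ∑ cⱼ vⱼ` sends `vⱼ` to `eⱼ`, so `T * g` is a preimage of `T`.
  obtain ⟨g, hg⟩ := (Fintype.linearCombination K v).exists_leftInverse_of_injective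
    (LinearMap.ker_eq_bot.2 (linearIndependent_iff_injective_fintypeLinearCombination.1 hv))
  have hB : ∀ j, LinearMap.toMatrix' g *ᵥ v j = Pi.single j 1 := by
    intro j
    rw [LinearMap.toMatrix'_mulVec, ← one_smul K (v j),
      ← Fintype.linearCombination_apply_single K v j 1]
    exact LinearMap.congr_fun hg _
  intro T
  refine ⟨(of fun i j => T j i) * LinearMap.toMatrix' g, funext fun j => ?_⟩
  change _ *ᵥ _ = _
  rw [← mulVec_mulVec, hB, mulVec_single_one]
  rfl

variable [Fintype K] [DecidableEq K] [Fintype m] [DecidableEq m] [DecidableEq n]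

theorem card_filter_forall_mulVec_eq_zero_mul_s4 [Fintype ι] {v : ι → n → K}
    (hv : LinearIndependent K v) :
    #{H : Matrix m n K | ∀ j, H *ᵥ v j = 0} * Fintype.card K ^ (Fintype.card m * Fintype.card ι)
      = Fintype.card (Matrix m n K) := by
  have key := LinearMap.card_ker_mul_card_of_surjective _ (mulVecFamily_surjective_s4 (m := m) hv)
  have hker : Nat.card (LinearMap.ker (mulVecFamily_s4 (m := m) v))
      = #{H : Matrix m n K | ∀ j, H *ᵥ v j = 0} := by
    rw [← Fintype.card_subtype, ← Nat.card_eq_fintype_card]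
    exact Nat.card_congr (Equiv.subtypeEquivRight fun H => funext_iff)
  rwa [hker, Nat.card_fun, Nat.card_fun, Nat.card_eq_fintype_card, Nat.card_eq_fintype_card,
    Nat.card_eq_fintype_card, Nat.card_eq_fintype_card, ← pow_mul] at key

theorem card_filter_mulVec_eq_zero_mul {v : n → K} (hv : v ≠ 0) :
    #{H : Matrix m n K | H *ᵥ v = 0} * Fintype.card K ^ Fintype.card m
      = Fintype.card (Matrix m n K) := by
  simpa using card_filter_forall_mulVec_eq_zero_mul_s4 (m := m)
    (linearIndependent_unique_iff.2 hv : LinearIndependent K ![v])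

theorem card_filter_mulVec_eq_zero_and_mulVec_eq_zero_mul {v w : n → K}
    (hvw : LinearIndependent K ![v, w]) :
    #{H : Matrix m n K | H *ᵥ v = 0 ∧ H *ᵥ w = 0} * (Fintype.card K ^ Fintype.card m) ^ 2
      = Fintype.card (Matrix m n K) := by
  simpa [Fin.forall_fin_two, pow_mul] using card_filter_forall_mulVec_eq_zero_mul_s4 (m := m) hvw

end Matrix

theorem prob_meets_random_code_lower_bound_quadratic_general (n r m : ℕ)
    (X : Finset (Fin n → ZMod 2)) (hX : ∀ v ∈ X, v ≠ 0) (hm : X.card = m)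
    (x : ℝ) (hx : x = (m : ℝ) * (2 : ℝ) ^ (-(r : ℤ))) :
    ((Finset.univ.filter
        (fun H : Matrix (Fin r) (Fin n) (ZMod 2) => ∃ v ∈ X, H.mulVec v = 0)).card : ℝ) /
      (Fintype.card (Matrix (Fin r) (Fin n) (ZMod 2)) : ℝ)
      ≥ x * (1 - x / 2) := by
  have hsingle : ∀ v ∈ X, (#{H : Matrix (Fin r) (Fin n) (ZMod 2) | H *ᵥ v = 0} : ℝ)
      = 2 ^ (-(r : ℤ)) * Fintype.card (Matrix (Fin r) (Fin n) (ZMod 2)) := by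
    intro v hv
    rw [← card_filter_mulVec_eq_zero_mul (hX v hv)]
    push_cast [ZMod.card, Fintype.card_fin, _root_.zpow_neg, zpow_natCast]
    field_simp
  have hpair : ∀ q ∈ X.offDiag,
      (#{H : Matrix (Fin r) (Fin n) (ZMod 2) | H *ᵥ q.1 = 0 ∧ H *ᵥ q.2 = 0} : ℝ)
        ≤ (2 ^ (-(r : ℤ))) ^ 2 * Fintype.card (Matrix (Fin r) (Fin n) (ZMod 2)) := by
    rintro ⟨v, w⟩ hvw
    obtain ⟨hv, hw, hne⟩ := mem_offDiag.1 hvw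
    refine le_of_eq ?_
    rw [← card_filter_mulVec_eq_zero_and_mulVec_eq_zero_mul
      (ZMod.linearIndependent_pair_of_ne (hX v hv) (hX w hw) hne)]
    push_cast [ZMod.card, Fintype.card_fin, _root_.zpow_neg, zpow_natCast]
    field_simp
  rw [ge_iff_le, le_div_iff₀ (by exact_mod_cast Fintype.card_pos), hx, ← hm]
  exact mul_one_sub_mul_card_le_card_filter_exists X _ _ hsingle hpair

/-- For a finite set `X` of `m` nonzero vectors of `𝔽₂ⁿ`, setting
`x := m · 2^(-r)`, the probability that `X` meets the random code `ker H` (for `H` a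
uniformly random `r × n` matrix over `𝔽₂`) is at least `x·(1 - x/2)`. -/
theorem prob_meets_random_code_lower_bound_quadratic (n r m : ℕ) (hn : 0 < n) (hr : 0 < r)
    (X : Finset (Fin n → ZMod 2)) (hX : ∀ v ∈ X, v ≠ 0) (hm : X.card = m)
    (x : ℝ) (hx : x = (m : ℝ) * (2 : ℝ) ^ (-(r : ℤ))) :
    ((Finset.univ.filter
        (fun H : Matrix (Fin r) (Fin n) (ZMod 2) => ∃ v ∈ X, H.mulVec v = 0)).card : ℝ) /
      (Fintype.card (Matrix (Fin r) (Fin n) (ZMod 2)) : ℝ)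
      ≥ x * (1 - x / 2) :=
  prob_meets_random_code_lower_bound_quadratic_general n r m X hX hm x hx
end

section
/- Let n and r be positive natural numbers and let X be a nonempty finite set of nonzero vectors in 𝔽₂ⁿ with |X| = m, and set x := m · 2^(−r). If H is a matrix chosen uniformly at random from all r × n matrices over 𝔽₂, then the probability that X meets the random code ker H satisfies P(X ∩ ker H ≠ ∅) ≥ 1 − 1/x. -/
open Finset Matrix

lemma fiber_card {M N : Type*} [AddCommGroup M] [AddCommGroup N] [Fintype M] [Fintype N]
    [DecidableEq N] (φ : M →+ N) (hs : Function.Surjective φ) :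
    (Finset.univ.filter (fun m => φ m = 0)).card * Fintype.card N = Fintype.card M := by
  classical
  have h1 : Nat.card M = Nat.card (M ⧸ φ.ker) * Nat.card φ.ker :=
    AddSubgroup.card_eq_card_quotient_mul_card_addSubgroup φ.ker
  have h2 : Nat.card (M ⧸ φ.ker) = Nat.card N := by
    have e1 := QuotientAddGroup.quotientKerEquivRange φ
    have e2 : φ.range = ⊤ := AddMonoidHom.range_eq_top.mpr hs
    rw [Nat.card_congr e1.toEquiv, e2]
    exact Nat.card_congr AddSubgroup.topEquiv.toEquiv
  have h3 : (Finset.univ.filter (fun m => φ m = 0)).card = Nat.card φ.ker := by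
    rw [Nat.card_eq_fintype_card, Fintype.card_subtype]
    congr 1
    ext m
    simp [AddMonoidHom.mem_ker]
  rw [h3, Nat.mul_comm, ← Nat.card_eq_fintype_card (α := N),
    ← Nat.card_eq_fintype_card (α := M), ← h2, ← h1]

lemma row_exists_aux {n : ℕ} (v w : Fin n → ZMod 2) (j : Fin n) (hj : v j = 1 ∧ w j = 0)
    (hw : w ≠ 0) (a b : ZMod 2) : ∃ u : Fin n → ZMod 2, u ⬝ᵥ v = a ∧ u ⬝ᵥ w = b := by
  obtain ⟨k, hk⟩ : ∃ k, w k ≠ 0 := by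
    by_contra h; push_neg at h; exact hw (funext fun i => h i)
  have hk1 : w k = 1 := by revert hk; generalize w k = c; revert c; decide
  refine ⟨Pi.single k b + Pi.single j (a + b * v k), ?_, ?_⟩
  · rw [add_dotProduct, single_dotProduct, single_dotProduct, hj.1]
    generalize v k = c; revert a b c; decide
  · rw [add_dotProduct, single_dotProduct, single_dotProduct, hj.2, hk1]
    generalize v k = c; revert a b c; decide

lemma row_exists {n : ℕ} (v w : Fin n → ZMod 2) (hv : v ≠ 0) (hw : w ≠ 0) (hvw : v ≠ w)
    (a b : ZMod 2) : ∃ u : Fin n → ZMod 2, u ⬝ᵥ v = a ∧ u ⬝ᵥ w = b := by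
  obtain ⟨j, hj⟩ : ∃ j, v j ≠ w j := by
    by_contra h; push_neg at h; exact hvw (funext h)
  have : (v j = 1 ∧ w j = 0) ∨ (w j = 1 ∧ v j = 0) := by
    revert hj; generalize v j = c; generalize w j = d; revert c d; decide
  rcases this with h | h
  · exact row_exists_aux v w j h hw a b
  · obtain ⟨u, h1, h2⟩ := row_exists_aux w v j h hv b a
    exact ⟨u, h2, h1⟩

lemma row_exists_one {n : ℕ} (v : Fin n → ZMod 2) (hv : v ≠ 0) (a : ZMod 2) :
    ∃ u : Fin n → ZMod 2, u ⬝ᵥ v = a := by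
  obtain ⟨j, hj⟩ : ∃ j, v j ≠ 0 := by
    by_contra h; push_neg at h; exact hv (funext fun i => h i)
  have hj1 : v j = 1 := by revert hj; generalize v j = c; revert c; decide
  exact ⟨Pi.single j a, by rw [single_dotProduct, hj1, mul_one]⟩

lemma count_one {n r : ℕ} (v : Fin n → ZMod 2) (hv : v ≠ 0) :
    (Finset.univ.filter
      (fun H : Matrix (Fin r) (Fin n) (ZMod 2) => H.mulVec v = 0)).card * 2 ^ r = 2 ^ (r * n) := by
  classical
  let φ : Matrix (Fin r) (Fin n) (ZMod 2) →+ (Fin r → ZMod 2) :=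
    AddMonoidHom.mk' (fun H => H.mulVec v) (fun A B => Matrix.add_mulVec A B v)
  have hs : Function.Surjective φ := by
    intro a
    choose u hu using fun i => row_exists_one v hv (a i)
    exact ⟨Matrix.of u, funext fun i => hu i⟩
  have := fiber_card φ hs
  have hcN : Fintype.card (Fin r → ZMod 2) = 2 ^ r := by simp
  have hcM : Fintype.card (Matrix (Fin r) (Fin n) (ZMod 2)) = 2 ^ (r * n) := by
    show Fintype.card (Fin r → Fin n → ZMod 2) = 2 ^ (r * n)
    simp [← pow_mul, mul_comm]
  rw [hcN, hcM] at this
  exact this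

lemma count_two {n r : ℕ} (v w : Fin n → ZMod 2) (hv : v ≠ 0) (hw : w ≠ 0) (hvw : v ≠ w) :
    (Finset.univ.filter
      (fun H : Matrix (Fin r) (Fin n) (ZMod 2) => H.mulVec v = 0 ∧ H.mulVec w = 0)).card
      * 2 ^ (2 * r) = 2 ^ (r * n) := by
  classical
  let φ : Matrix (Fin r) (Fin n) (ZMod 2) →+ ((Fin r → ZMod 2) × (Fin r → ZMod 2)) :=
    AddMonoidHom.mk' (fun H => (H.mulVec v, H.mulVec w))
      (fun A B => by simp [Matrix.add_mulVec, Prod.ext_iff])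
  have hs : Function.Surjective φ := by
    intro ⟨a, b⟩
    choose u hu1 hu2 using fun i => row_exists v w hv hw hvw (a i) (b i)
    exact ⟨Matrix.of u, Prod.ext (funext fun i => hu1 i) (funext fun i => hu2 i)⟩
  have := fiber_card φ hs
  have hcN : Fintype.card ((Fin r → ZMod 2) × (Fin r → ZMod 2)) = 2 ^ (2 * r) := by
    simp [two_mul, pow_add]
  have hcM : Fintype.card (Matrix (Fin r) (Fin n) (ZMod 2)) = 2 ^ (r * n) := by
    show Fintype.card (Fin r → Fin n → ZMod 2) = 2 ^ (r * n)
    simp [← pow_mul, mul_comm]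
  have heq : (Finset.univ.filter
      (fun H : Matrix (Fin r) (Fin n) (ZMod 2) => H.mulVec v = 0 ∧ H.mulVec w = 0)) =
      (Finset.univ.filter (fun H => φ H = 0)) := by
    apply Finset.filter_congr
    intro H _
    simp [φ, Prod.ext_iff]
  rw [heq, ← hcN, ← hcM]
  exact this

/-- For a nonempty finite set `X` of `m` nonzero vectors of `𝔽₂ⁿ`, setting
`x := m · 2^(-r)`, the probability that `X` meets the random code `ker H` (for `H` a
uniformly random `r × n` matrix over `𝔽₂`) is at least `1 - 1/x`. -/
theorem prob_meets_random_code_lower_bound_chebyshev (n r m : ℕ) (hn : 0 < n) (hr : 0 < r)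
    (X : Finset (Fin n → ZMod 2)) (hXne : X.Nonempty) (hX : ∀ v ∈ X, v ≠ 0)
    (hm : X.card = m)
    (x : ℝ) (hx : x = (m : ℝ) * (2 : ℝ) ^ (-(r : ℤ))) :
    ((Finset.univ.filter
        (fun H : Matrix (Fin r) (Fin n) (ZMod 2) => ∃ v ∈ X, H.mulVec v = 0)).card : ℝ) /
      (Fintype.card (Matrix (Fin r) (Fin n) (ZMod 2)) : ℝ)
      ≥ 1 - 1 / x := by
  set F : Matrix (Fin r) (Fin n) (ZMod 2) → ℕ :=
    fun H => (X.filter (fun v => H.mulVec v = 0)).card with hF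
  set A : Finset (Matrix (Fin r) (Fin n) (ZMod 2)) :=
    Finset.univ.filter (fun H => ∃ v ∈ X, H.mulVec v = 0) with hA
  -- first moment
  have hsum1 : (∑ H : Matrix (Fin r) (Fin n) (ZMod 2), F H)
      = ∑ v ∈ X, (Finset.univ.filter
        (fun H : Matrix (Fin r) (Fin n) (ZMod 2) => H.mulVec v = 0)).card := by
    simp only [hF, Finset.card_filter]
    rw [Finset.sum_comm]
  have E1 : (∑ H : Matrix (Fin r) (Fin n) (ZMod 2), F H) * 2 ^ r = m * 2 ^ (r * n) := by
    rw [hsum1, Finset.sum_mul]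
    rw [Finset.sum_congr rfl (fun v hv => count_one v (hX v hv))]
    simp [hm]
  -- second moment
  have hsum2 : (∑ H : Matrix (Fin r) (Fin n) (ZMod 2), F H ^ 2)
      = ∑ v ∈ X, ∑ w ∈ X, (Finset.univ.filter
        (fun H : Matrix (Fin r) (Fin n) (ZMod 2) =>
          H.mulVec v = 0 ∧ H.mulVec w = 0)).card := by
    have hpt : ∀ H : Matrix (Fin r) (Fin n) (ZMod 2), F H ^ 2
        = ∑ v ∈ X, ∑ w ∈ X,
          if H.mulVec v = 0 ∧ H.mulVec w = 0 then 1 else 0 := by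
      intro H
      rw [sq, hF]
      simp only [Finset.card_filter]
      rw [Finset.sum_mul_sum]
      refine Finset.sum_congr rfl fun v _ => Finset.sum_congr rfl fun w _ => ?_
      by_cases h1 : H.mulVec v = 0 <;> by_cases h2 : H.mulVec w = 0 <;> simp [h1, h2]
    simp only [hpt, Finset.card_filter]
    rw [Finset.sum_comm]
    exact Finset.sum_congr rfl fun v _ => Finset.sum_comm
  have E2 : (∑ H : Matrix (Fin r) (Fin n) (ZMod 2), F H ^ 2) * 2 ^ (2 * r)
      ≤ (m * 2 ^ r + m * m) * 2 ^ (r * n) := by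
    rw [hsum2, Finset.sum_mul]
    have hrow : ∀ v ∈ X, (∑ w ∈ X, (Finset.univ.filter
        (fun H : Matrix (Fin r) (Fin n) (ZMod 2) =>
          H.mulVec v = 0 ∧ H.mulVec w = 0)).card) * 2 ^ (2 * r)
        ≤ 2 ^ r * 2 ^ (r * n) + m * 2 ^ (r * n) := by
      intro v hv
      rw [← Finset.add_sum_erase _ _ hv, add_mul, Finset.sum_mul]
      have hdiag : (Finset.univ.filter
          (fun H : Matrix (Fin r) (Fin n) (ZMod 2) =>
            H.mulVec v = 0 ∧ H.mulVec v = 0)).card * 2 ^ (2 * r)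
          = 2 ^ r * 2 ^ (r * n) := by
        have : (Finset.univ.filter
            (fun H : Matrix (Fin r) (Fin n) (ZMod 2) =>
              H.mulVec v = 0 ∧ H.mulVec v = 0))
            = Finset.univ.filter
            (fun H : Matrix (Fin r) (Fin n) (ZMod 2) => H.mulVec v = 0) := by
          apply Finset.filter_congr; intro H _; simp
        rw [this, two_mul, pow_add, ← mul_assoc, count_one v (hX v hv)]
        ring
      have hoff : ∑ w ∈ X.erase v, (Finset.univ.filter
          (fun H : Matrix (Fin r) (Fin n) (ZMod 2) =>
            H.mulVec v = 0 ∧ H.mulVec w = 0)).card * 2 ^ (2 * r)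
          ≤ m * 2 ^ (r * n) := by
        calc ∑ w ∈ X.erase v, (Finset.univ.filter
            (fun H : Matrix (Fin r) (Fin n) (ZMod 2) =>
              H.mulVec v = 0 ∧ H.mulVec w = 0)).card * 2 ^ (2 * r)
            = ∑ w ∈ X.erase v, 2 ^ (r * n) := by
              refine Finset.sum_congr rfl fun w hw => ?_
              have hwX := Finset.mem_of_mem_erase hw
              exact count_two v w (hX v hv) (hX w hwX)
                (fun h => (Finset.ne_of_mem_erase hw) h.symm)
          _ = (X.erase v).card * 2 ^ (r * n) := by rw [Finset.sum_const, smul_eq_mul]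
          _ ≤ m * 2 ^ (r * n) := by
              apply Nat.mul_le_mul_right
              calc (X.erase v).card ≤ X.card := Finset.card_le_card (Finset.erase_subset _ _)
                _ = m := hm
      rw [hdiag]
      exact Nat.add_le_add_left hoff _
    calc ∑ v ∈ X, (∑ w ∈ X, (Finset.univ.filter
        (fun H : Matrix (Fin r) (Fin n) (ZMod 2) =>
          H.mulVec v = 0 ∧ H.mulVec w = 0)).card) * 2 ^ (2 * r)
        ≤ ∑ v ∈ X, (2 ^ r * 2 ^ (r * n) + m * 2 ^ (r * n)) := Finset.sum_le_sum hrow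
      _ = m * (2 ^ r * 2 ^ (r * n) + m * 2 ^ (r * n)) := by rw [Finset.sum_const, smul_eq_mul, hm]
      _ = (m * 2 ^ r + m * m) * 2 ^ (r * n) := by ring
  -- F vanishes off A, restrict sums
  have hFA : ∀ H ∉ A, F H = 0 := by
    intro H hH
    rw [hA, Finset.mem_filter] at hH
    push_neg at hH
    rw [hF, Finset.card_eq_zero, Finset.filter_eq_empty_iff]
    exact fun {v} hv => hH (Finset.mem_univ H) v hv
  have hres : ∑ H ∈ A, F H = ∑ H : Matrix (Fin r) (Fin n) (ZMod 2), F H :=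
    Finset.sum_subset (Finset.subset_univ A) (fun H _ hH => hFA H hH)
  -- Cauchy–Schwarz, in ℝ
  have CS : ((∑ H : Matrix (Fin r) (Fin n) (ZMod 2), F H : ℕ) : ℝ) ^ 2
      ≤ (A.card : ℝ) * ((∑ H : Matrix (Fin r) (Fin n) (ZMod 2), F H ^ 2 : ℕ) : ℝ) := by
    have h1 := sq_sum_le_card_mul_sum_sq (s := A) (f := fun H => ((F H : ℝ)))
    have h2 : ∑ H ∈ A, ((F H : ℝ)) ^ 2
        ≤ ∑ H : Matrix (Fin r) (Fin n) (ZMod 2), ((F H : ℝ)) ^ 2 := by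
      apply Finset.sum_le_sum_of_subset_of_nonneg (Finset.subset_univ A)
      intro i _ _; positivity
    calc ((∑ H : Matrix (Fin r) (Fin n) (ZMod 2), F H : ℕ) : ℝ) ^ 2
        = (∑ H ∈ A, ((F H : ℝ))) ^ 2 := by rw [← hres]; push_cast; ring
      _ ≤ (A.card : ℝ) * ∑ H ∈ A, ((F H : ℝ)) ^ 2 := h1
      _ ≤ (A.card : ℝ) * ∑ H : Matrix (Fin r) (Fin n) (ZMod 2), ((F H : ℝ)) ^ 2 := by
          apply mul_le_mul_of_nonneg_left h2 (by positivity)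
      _ = (A.card : ℝ) * ((∑ H : Matrix (Fin r) (Fin n) (ZMod 2), F H ^ 2 : ℕ) : ℝ) := by
          push_cast; ring
  -- notation for reals
  set p : ℝ := (2 : ℝ) ^ r with hp
  set T : ℝ := (2 : ℝ) ^ (r * n) with hTdef
  have hp0 : 0 < p := by positivity
  have hT0 : 0 < T := by positivity
  have hm1 : (1 : ℝ) ≤ (m : ℝ) := by
    have : 0 < m := hm ▸ Finset.card_pos.mpr hXne
    exact_mod_cast this
  have hm0 : (0 : ℝ) < (m : ℝ) := lt_of_lt_of_le one_pos hm1
  set s1 : ℝ := ((∑ H : Matrix (Fin r) (Fin n) (ZMod 2), F H : ℕ) : ℝ) with hs1def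
  set s2 : ℝ := ((∑ H : Matrix (Fin r) (Fin n) (ZMod 2), F H ^ 2 : ℕ) : ℝ) with hs2def
  have hE1 : s1 * p = (m : ℝ) * T := by
    rw [hs1def, hp, hTdef]
    exact_mod_cast congrArg (Nat.cast : ℕ → ℝ) E1
  have hE2 : s2 * p ^ 2 ≤ ((m : ℝ) * p + (m : ℝ) * (m : ℝ)) * T := by
    have h : s2 * (2 : ℝ) ^ (2 * r) ≤ ((m : ℝ) * 2 ^ r + (m : ℝ) * (m : ℝ)) * 2 ^ (r * n) := by
      rw [hs2def]; exact_mod_cast E2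
    calc s2 * p ^ 2 = s2 * (2 : ℝ) ^ (2 * r) := by
          rw [hp, ← pow_mul, mul_comm r 2]
      _ ≤ ((m : ℝ) * p + (m : ℝ) * (m : ℝ)) * T := by rw [hp, hTdef]; exact h
  set a : ℝ := (A.card : ℝ) with ha
  have ha0 : (0 : ℝ) ≤ a := by positivity
  have h5 : ((m : ℝ) * T) ^ 2 ≤ a * (((m : ℝ) * p + (m : ℝ) * (m : ℝ)) * T) := by
    calc ((m : ℝ) * T) ^ 2 = s1 ^ 2 * p ^ 2 := by rw [← hE1]; ring
      _ ≤ (a * s2) * p ^ 2 := by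
          apply mul_le_mul_of_nonneg_right CS (by positivity)
      _ = a * (s2 * p ^ 2) := by ring
      _ ≤ a * (((m : ℝ) * p + (m : ℝ) * (m : ℝ)) * T) :=
          mul_le_mul_of_nonneg_left hE2 ha0
  have key : (m : ℝ) * T ≤ a * (p + (m : ℝ)) := by
    nlinarith [h5, mul_pos hm0 hT0, hm0, hT0, ha0]
  -- goal manipulation
  have hcard : (Fintype.card (Matrix (Fin r) (Fin n) (ZMod 2)) : ℝ) = T := by
    rw [hTdef]
    have : Fintype.card (Matrix (Fin r) (Fin n) (ZMod 2)) = 2 ^ (r * n) := by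
      show Fintype.card (Fin r → Fin n → ZMod 2) = 2 ^ (r * n)
      simp [← pow_mul, mul_comm]
    rw [this]; push_cast; ring
  clear hsum1 hsum2 E1 E2 hFA hres CS hE1 hE2 h5 hs1def hs2def
  clear_value s1 s2
  clear s1 s2
  rw [ge_iff_le, hcard, le_div_iff₀ hT0]
  clear_value a p T
  clear ha hTdef
  clear hcard hA hF A F hX hXne hm X
  have hxval : x = (m : ℝ) / p := by
    rw [hx, _root_.zpow_neg, zpow_natCast, div_eq_mul_inv, hp]
  have hq : 1 / x = p / (m : ℝ) := by rw [hxval, one_div_div]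
  rw [hq]
  set q : ℝ := p / (m : ℝ) with hqdef
  have hqp : (m : ℝ) * q = p := by
    rw [hqdef, mul_div_cancel₀ _ (ne_of_gt hm0)]
  have hq0 : 0 < q := by rw [hqdef]; positivity
  have hT1 : T ≤ a * (q + 1) := by nlinarith [key, hqp, hm0]
  rcases le_or_gt 1 q with hcase | hcase
  · nlinarith [hT0, ha0]
  · nlinarith [hT1, mul_nonneg ha0 (sq_nonneg q), hq0, hT0, ha0]
end
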